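/- For every 0 < d ≤ 1 there exist a constant c with 0 < c ≤ 1 and a prime p₀ such that for every prime p ≥ p₀ and every S ⊆ ℤ/pℤ with |S| ≥ dp, the number of 3APs (trivial and nontrivial) in S is greater than c·p². -/

import Mathlib

/-- The number of three-term arithmetic progressions in `S ⊆ ℤ/pℤ`, i.e. the number of
ordered pairs `(n, m)` of residues with `n, n + m, n + 2m ∈ S` (trivial and nontrivial).
Such pairs are counted via the equivalent, bijective encoding `(n, m) ↦ (n, n + m)`,
a pair `(x, y) ∈ S × S` with `n + 2m = 2y - x ∈ S`. -/
def threeAPCount {p : ℕ} (S : Finset (ZMod p)) : ℕ :=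
  ((S ×ˢ S).filter fun q => 2 * q.2 - q.1 ∈ S).card

open Finset SimpleGraph SimpleGraph.TripartiteFromTriangles Sum3

namespace APAux

variable {p : ℕ} [NeZero p] (S : Finset (ZMod p))

/-- All 3AP triangles. -/
def tFull : Finset (ZMod p × ZMod p × ZMod p) :=
  univ.filter fun w =>
    w.2.1 - w.1 ∈ S ∧ (w.2.2 - w.1) * (2 : ZMod p)⁻¹ ∈ S ∧ w.2.2 - w.2.1 ∈ S

/-- Trivial 3AP triangles. -/
def tTriv : Finset (ZMod p × ZMod p × ZMod p) :=
  univ.filter fun w => w.2.1 - w.1 ∈ S ∧ w.2.2 = 2 * w.2.1 - w.1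

lemma mem_tFull {a b c : ZMod p} :
    (a, b, c) ∈ tFull S ↔ b - a ∈ S ∧ (c - a) * (2 : ZMod p)⁻¹ ∈ S ∧ c - b ∈ S := by
  simp [tFull]

lemma mem_tTriv {a b c : ZMod p} :
    (a, b, c) ∈ tTriv S ↔ b - a ∈ S ∧ c = 2 * b - a := by
  simp [tTriv]

variable {S}
variable [Fact p.Prime] (h2 : (2 : ZMod p) ≠ 0)
include h2

lemma tTriv_subset : tTriv S ⊆ tFull S := by
  rintro ⟨a, b, c⟩ h
  rw [mem_tTriv] at h
  obtain ⟨hb, rfl⟩ := h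
  rw [mem_tFull]
  refine ⟨hb, ?_, by rwa [show 2 * b - a - b = b - a by ring]⟩
  rwa [show (2 * b - a - a) * (2 : ZMod p)⁻¹ = 2 * (b - a) * (2 : ZMod p)⁻¹ by ring,
    mul_comm (2 : ZMod p), mul_inv_cancel_right₀ h2]

lemma explicitDisjoint : ExplicitDisjoint (tTriv S) := by
  constructor
  · intro a b c a' h h'
    rw [mem_tTriv] at h h'
    have := h.2.symm.trans h'.2
    linear_combination -this
  · intro a b c b' h h'
    rw [mem_tTriv] at h h'
    have h3 : 2 * b = 2 * b' := by linear_combination h.2.symm.trans h'.2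
    exact mul_left_cancel₀ h2 h3
  · intro a b c c' h h'
    rw [mem_tTriv] at h h'
    rw [h.2, h'.2]

omit h2 in
lemma card_tTriv : #(tTriv S) = p * #S := by
  rw [show p * #S = #((univ : Finset (ZMod p)) ×ˢ S) by simp [ZMod.card]]
  refine Finset.card_bij' (fun w _ => (w.1, w.2.1 - w.1))
    (fun q _ => (q.1, q.1 + q.2, q.1 + 2 * q.2)) ?hi ?hj ?li ?ri
  case hi =>
    rintro ⟨a, b, c⟩ hw
    rw [mem_tTriv] at hw
    simp [hw.1]
  case hj =>
    rintro ⟨x, s⟩ hq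
    simp only [mem_product, mem_univ, true_and] at hq
    rw [mem_tTriv]
    constructor
    · simpa using hq
    · ring
  case li =>
    rintro ⟨a, b, c⟩ hw
    rw [mem_tTriv] at hw
    simp only [Prod.mk.injEq]
    refine ⟨trivial, by ring, ?_⟩
    rw [hw.2]; ring
  case ri =>
    rintro ⟨x, s⟩ _
    simp

lemma card_tFull : #(tFull S) = p * threeAPCount S := by
  rw [threeAPCount,
    show p * #((S ×ˢ S).filter fun q => 2 * q.2 - q.1 ∈ S)
      = #((univ : Finset (ZMod p)) ×ˢ ((S ×ˢ S).filter fun q => 2 * q.2 - q.1 ∈ S)) by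
        simp [ZMod.card]]
  refine Finset.card_bij' (fun w _ => (w.1, (w.2.1 - w.1, (w.2.2 - w.1) * (2 : ZMod p)⁻¹)))
    (fun q _ => (q.1, q.1 + q.2.1, q.1 + 2 * q.2.2)) ?hi ?hj ?li ?ri
  case hi =>
    rintro ⟨a, b, c⟩ hw
    rw [mem_tFull] at hw
    obtain ⟨h1, h2', h3⟩ := hw
    simp only [mem_product, mem_univ, true_and, mem_filter]
    refine ⟨⟨h1, h2'⟩, ?_⟩
    rw [show (2 : ZMod p) * ((c - a) * (2 : ZMod p)⁻¹) - (b - a)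
        = (c - a) * ((2 : ZMod p) * (2 : ZMod p)⁻¹) - (b - a) by ring,
      mul_inv_cancel₀ h2]
    simpa [show c - a - (b - a) = c - b by ring] using h3
  case hj =>
    rintro ⟨x, u, v⟩ hq
    simp only [mem_product, mem_univ, true_and, mem_filter, mem_product] at hq
    rw [mem_tFull]
    refine ⟨by simpa using hq.1.1, ?_, ?_⟩
    · rw [show (x + 2 * v - x) * (2 : ZMod p)⁻¹ = v * ((2:ZMod p) * (2 : ZMod p)⁻¹) by ring,
        mul_inv_cancel₀ h2, mul_one]
      exact hq.1.2
    · rw [show x + 2 * v - (x + u) = 2 * v - u by ring]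
      exact hq.2
  case li =>
    rintro ⟨a, b, c⟩ hw
    simp only [Prod.mk.injEq]
    refine ⟨trivial, by ring, ?_⟩
    rw [show (2:ZMod p) * ((c - a) * (2 : ZMod p)⁻¹) = (c - a) * ((2:ZMod p) * (2 : ZMod p)⁻¹) by ring,
      mul_inv_cancel₀ h2]
    ring
  case ri =>
    rintro ⟨x, u, v⟩ _
    simp only [Prod.mk.injEq]
    refine ⟨trivial, by ring, ?_⟩
    rw [show (x + 2 * v - x) * (2 : ZMod p)⁻¹ = v * ((2:ZMod p) * (2 : ZMod p)⁻¹) by ring,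
      mul_inv_cancel₀ h2, mul_one]

omit [Fact p.Prime] h2 in
lemma cliqueFinset_eq :
    (graph (tFull S)).cliqueFinset 3 = (tFull S).map toTriangle := by
  ext s
  rw [mem_cliqueFinset_iff, mem_map]
  constructor
  · intro h
    rw [is3Clique_iff] at h
    obtain ⟨x, y, z, hxy, hxz, hyz, rfl⟩ := h
    obtain ⟨a, b, c, habc, hab, hac, hbc⟩ := graph_triple hxy hxz hyz
    refine ⟨(a, b, c), ?_, habc⟩
    obtain ⟨c', hc'⟩ := Graph.in₀₁_iff.1 hab
    obtain ⟨b', hb'⟩ := Graph.in₀₂_iff.1 hac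
    obtain ⟨a', ha'⟩ := Graph.in₁₂_iff.1 hbc
    rw [mem_tFull] at hc' hb' ha' ⊢
    exact ⟨hc'.1, hb'.2.1, ha'.2.2⟩
  · rintro ⟨x, hx, rfl⟩
    exact toTriangle_is3Clique hx

end APAux


/-- For every `0 < d ≤ 1` there are `0 < c ≤ 1` and a prime `p₀` such that for every prime
`p ≥ p₀` and every `S ⊆ ℤ/pℤ` with `|S| ≥ dp`, the number of 3APs (trivial and nontrivial)
in `S` is greater than `cp²`. -/
theorem dense_sets_have_many_aps (d : ℝ) (hd0 : 0 < d) (hd1 : d ≤ 1) :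
    ∃ c : ℝ, 0 < c ∧ c ≤ 1 ∧ ∃ p₀ : ℕ, p₀.Prime ∧ ∀ p : ℕ, p.Prime → p₀ ≤ p →
      ∀ S : Finset (ZMod p), d * p ≤ (S.card : ℝ) →
        c * (p : ℝ) ^ 2 < (threeAPCount S : ℝ) := by
  classical
  set trb := SimpleGraph.triangleRemovalBound (d / 9) with htrb_def
  have htrb : 0 < trb :=
    SimpleGraph.triangleRemovalBound_pos (by positivity)
  refine ⟨min 1 (27 * trb / 2), by positivity, min_le_left _ _, 3, by norm_num, ?_⟩
  intro p hp hp3 S hS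
  haveI : Fact p.Prime := ⟨hp⟩
  have hp0 : (0 : ℝ) < p := by positivity
  have h2 : (2 : ZMod p) ≠ 0 := by
    intro h
    have : p ∣ 2 := by
      have := (ZMod.natCast_eq_zero_iff 2 p).1 (by exact_mod_cast h)
      exact this
    have := Nat.le_of_dvd (by norm_num) this
    omega
  haveI : SimpleGraph.TripartiteFromTriangles.ExplicitDisjoint (APAux.tTriv S) :=
    APAux.explicitDisjoint h2
  have hV : Fintype.card (ZMod p ⊕ ZMod p ⊕ ZMod p) = 3 * p := by
    simp [ZMod.card]; ring
  have hfar : (SimpleGraph.TripartiteFromTriangles.graph (APAux.tFull S)).FarFromTriangleFree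
      (d / 9) := by
    apply SimpleGraph.farFromTriangleFree_of_disjoint_triangles
      ((APAux.tTriv S).map SimpleGraph.TripartiteFromTriangles.toTriangle)
    · refine Finset.map_subset_iff_subset_preimage.2 fun x hx => ?_
      simpa using SimpleGraph.TripartiteFromTriangles.toTriangle_is3Clique
        (APAux.tTriv_subset h2 hx)
    · exact SimpleGraph.TripartiteFromTriangles.map_toTriangle_disjoint (APAux.tTriv S)
    · rw [Finset.card_map, APAux.card_tTriv, hV]
      push_cast
      nlinarith [hS, hp0, S.card.cast_nonneg (α := ℝ)]
  have h1 := hfar.le_card_cliqueFinset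
  rw [APAux.cliqueFinset_eq, Finset.card_map, APAux.card_tFull h2, hV] at h1
  push_cast at h1
  have h27 : 27 * trb * (p : ℝ) ^ 2 ≤ (threeAPCount S : ℝ) := by nlinarith [h1, hp0]
  calc min 1 (27 * trb / 2) * (p : ℝ) ^ 2
      ≤ 27 * trb / 2 * (p : ℝ) ^ 2 := by
        exact mul_le_mul_of_nonneg_right (min_le_right _ _) (by positivity)
    _ < 27 * trb * (p : ℝ) ^ 2 := by nlinarith [mul_pos htrb (pow_pos hp0 2)]
    _ ≤ _ := h27
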